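/- Compactness of the polygon space for q = 1: let n ≥ 3 and let r₁, …, r_n be positive real numbers. The set of (n−1)-tuples (u₁, …, u_{n−1}) ∈ (ℝ³)^{n−1} such that each uᵢ lies on the future pseudosphere H⁺_{rᵢ} and u₁ + ⋯ + u_{n−1} = (0, 0, r_n) is a compact subset of (ℝ³)^{n−1}. -/
import Mathlib


/-- Membership in the future pseudosphere H⁺_R:
`t² − x² − y² = R²` and `t > 0`. -/
def OnFuturePseudosphere (R : ℝ) (v : Fin 3 → ℝ) : Prop :=
  (v 2) ^ 2 - (v 0) ^ 2 - (v 1) ^ 2 = R ^ 2 ∧ 0 < v 2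

/-- Compactness of the polygon space for q = 1: for n ≥ 3 and positive
r₁, …, r_n, the set of (n−1)-tuples (u₁, …, u_{n−1}) with each uᵢ on the
future pseudosphere H⁺_{rᵢ} and u₁ + ⋯ + u_{n−1} = (0, 0, r_n) is compact. -/
theorem polygon_space_q_one_compact
    (n : ℕ) (hn : 3 ≤ n) (r : Fin n → ℝ) (hr : ∀ i, 0 < r i) :
    IsCompact {u : Fin (n - 1) → (Fin 3 → ℝ) |
      (∀ i : Fin (n - 1), OnFuturePseudosphere (r (Fin.castLE (by omega) i)) (u i)) ∧
      (∑ i, u i) = ![0, 0, r ⟨n - 1, by omega⟩]} := by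
  have hrnpos : 0 < r ⟨n - 1, by omega⟩ := hr _
  apply Metric.isCompact_of_isClosed_isBounded
  · have heq : {u : Fin (n - 1) → (Fin 3 → ℝ) |
        (∀ i : Fin (n - 1), OnFuturePseudosphere (r (Fin.castLE (by omega) i)) (u i)) ∧
        (∑ i, u i) = ![0, 0, r ⟨n - 1, by omega⟩]} =
        (⋂ i : Fin (n - 1),
          ({u : Fin (n - 1) → (Fin 3 → ℝ) |
            (u i 2) ^ 2 - (u i 0) ^ 2 - (u i 1) ^ 2 = (r (Fin.castLE (by omega) i)) ^ 2} ∩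
           {u : Fin (n - 1) → (Fin 3 → ℝ) | r (Fin.castLE (by omega) i) ≤ u i 2})) ∩
        {u : Fin (n - 1) → (Fin 3 → ℝ) | (∑ i, u i) = ![0, 0, r ⟨n - 1, by omega⟩]} := by
      ext u
      simp only [Set.mem_setOf_eq, Set.mem_inter_iff, Set.mem_iInter, OnFuturePseudosphere]
      constructor
      · rintro ⟨h1, h2⟩
        refine ⟨fun i => ⟨(h1 i).1, ?_⟩, h2⟩
        have h := (h1 i).1
        have ht := (h1 i).2
        nlinarith [hr (Fin.castLE (by omega) i), sq_nonneg (u i 0), sq_nonneg (u i 1)]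
      · rintro ⟨h1, h2⟩
        exact ⟨fun i => ⟨(h1 i).1, lt_of_lt_of_le (hr _) (h1 i).2⟩, h2⟩
    rw [heq]
    apply IsClosed.inter
    · apply isClosed_iInter
      intro i
      apply IsClosed.inter
      · exact isClosed_eq (by fun_prop) continuous_const
      · exact isClosed_le continuous_const (by fun_prop)
    · exact isClosed_eq (by fun_prop) continuous_const
  · rw [Metric.isBounded_iff_subset_closedBall 0]
    refine ⟨r ⟨n - 1, by omega⟩, fun u hu => ?_⟩
    obtain ⟨h1, h2⟩ := hu
    have hsum : ∑ k, u k 2 = r ⟨n - 1, by omega⟩ := by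
      have := congrFun h2 2
      simpa [Finset.sum_apply] using this
    rw [Metric.mem_closedBall, dist_zero_right]
    rw [pi_norm_le_iff_of_nonneg hrnpos.le]
    intro i
    have hle : u i 2 ≤ r ⟨n - 1, by omega⟩ := by
      rw [← hsum]
      exact Finset.single_le_sum (fun k _ => ((h1 k).2).le) (Finset.mem_univ i)
    rw [pi_norm_le_iff_of_nonneg hrnpos.le]
    intro j
    have h := (h1 i).1
    have ht := (h1 i).2
    have hri := hr (Fin.castLE (show n - 1 ≤ n by omega) i)
    have hb0 : |u i 0| ≤ r ⟨n - 1, by omega⟩ := by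
      rw [abs_le]
      constructor <;> nlinarith [sq_nonneg (u i 0), sq_nonneg (u i 1), hrnpos]
    have hb1 : |u i 1| ≤ r ⟨n - 1, by omega⟩ := by
      rw [abs_le]
      constructor <;> nlinarith [sq_nonneg (u i 0), sq_nonneg (u i 1), hrnpos]
    have hb2 : |u i 2| ≤ r ⟨n - 1, by omega⟩ := by
      rw [abs_le]
      constructor <;> nlinarith
    fin_cases j
    · simpa [Real.norm_eq_abs] using hb0
    · simpa [Real.norm_eq_abs] using hb1
    · simpa [Real.norm_eq_abs] using hb2
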